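/- Let L be a complex Hilbert space and let Λ, Λ' : L → L be anti-symmetric real-linear maps such that Λ² and Λ'² are trace class. Then the composite Λ'∘Λ is a bounded complex-linear operator, it is trace class, and its Hilbert-space adjoint satisfies (Λ'∘Λ)* = Λ∘Λ'. -/

import Mathlib

/-!
An anti-symmetric `Λ` has closed graph, hence is bounded, and it is conjugate-linear, so `Λ'Λ` is a
bounded `ℂ`-linear operator; anti-symmetry moves both factors across the inner product, which gives
`(Λ'Λ)* = ΛΛ'`. Since `⟨x, Λ²x⟩ = -‖Λx‖²`, we have `|Λ²| = -Λ²`, so `Λ²` being trace class says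
that `∑ᵢ ‖Λeᵢ‖² < ∞` for some Hilbert basis, i.e. `Λ` is Hilbert–Schmidt.

For `T = Λ'Λ`, in place of a polar decomposition, the contraction `V = T(|T| + ε)⁻¹` gives
`⟨ξ, |T|ξ⟩ ≤ Re ⟨Vξ, Tξ⟩ + ε‖ξ‖²`, and
`Re ⟨Veᵢ, Λ'Λeᵢ⟩ = -Re ⟨Λeᵢ, Λ'Veᵢ⟩ ≤ (‖Λeᵢ‖² + ‖Λ'Veᵢ‖²) / 2`.
Expanding `‖Λ'Veᵢ‖²` in a basis `(fⱼ)` adapted to `Λ'` and using anti-symmetry once more,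
`∑ᵢ ‖Λ'Veᵢ‖² = ∑ⱼ ∑ᵢ |⟨eᵢ, V*Λ'fⱼ⟩|² ≤ ∑ⱼ ‖Λ'fⱼ‖²`, so the two Hilbert–Schmidt sums bound
the trace of `|T|`.
-/

open scoped ComplexInnerProductSpace

/-- The absolute value `|T| = sqrt (T† T)` of a bounded operator on a complex Hilbert space. -/
noncomputable def opAbs {L : Type*} [NormedAddCommGroup L] [InnerProductSpace ℂ L]
    [CompleteSpace L] (T : L →L[ℂ] L) : L →L[ℂ] L :=
  CFC.sqrt (ContinuousLinearMap.adjoint T * T)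

/-- A bounded operator `T` is trace class if `∑ᵢ ⟨eᵢ, |T| eᵢ⟩ < ∞` for some orthonormal
(Hilbert) basis. -/
def IsTraceClassOp {L : Type*} [NormedAddCommGroup L] [InnerProductSpace ℂ L]
    [CompleteSpace L] (T : L →L[ℂ] L) : Prop :=
  ∃ (ι : Type) (e : HilbertBasis ι ℂ L),
    Summable fun i => (⟪e i, opAbs T (e i)⟫).re

/-- A map `f : L → L` is trace class if it is (the coercion of) a trace class bounded
complex-linear operator. -/
def IsTraceClassFun {L : Type*} [NormedAddCommGroup L] [InnerProductSpace ℂ L]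
    [CompleteSpace L] (f : L → L) : Prop :=
  ∃ T : L →L[ℂ] L, ⇑T = f ∧ IsTraceClassOp T

section CStarAlgebra

variable {𝒜 : Type*} [CStarAlgebra 𝒜] [PartialOrder 𝒜] [StarOrderedRing 𝒜] {a : 𝒜} {ε : ℝ}

theorem continuousOn_inv_add_spectrum (ha : 0 ≤ a) (hε : 0 < ε) :
    ContinuousOn (fun t : ℝ => (t + ε)⁻¹) (spectrum ℝ a) :=
  ContinuousOn.inv₀ (by fun_prop) fun t ht => by linarith [spectrum_nonneg_of_nonneg ha ht]

theorem norm_mul_cfc_inv_add_le_one (ha : 0 ≤ a) (hε : 0 < ε) :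
    ‖a * cfc (fun t : ℝ => (t + ε)⁻¹) a‖ ≤ 1 := by
  nth_rw 1 [← cfc_id' ℝ a]
  rw [← cfc_mul (fun t : ℝ => t) _ a (continuousOn_id' _) (continuousOn_inv_add_spectrum ha hε)]
  refine norm_cfc_le zero_le_one fun t ht => ?_
  have ht := spectrum_nonneg_of_nonneg ha ht
  rw [Real.norm_of_nonneg (by positivity), mul_inv_le_iff₀ (by positivity)]
  linarith

theorem le_cfc_inv_add_mul_mul_add (ha : 0 ≤ a) (hε : 0 < ε) :
    a ≤ cfc (fun t : ℝ => (t + ε)⁻¹) a * a * a + algebraMap ℝ 𝒜 ε := by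
  have hcont := continuousOn_inv_add_spectrum ha hε
  calc a = cfc (fun t : ℝ => t) a := (cfc_id' ℝ a).symm
    _ ≤ cfc (fun t : ℝ => (t + ε)⁻¹ * t * t + ε) a := by
        refine cfc_mono (fun t ht => ?_) (continuousOn_id' _)
          (((hcont.mul (continuousOn_id' _)).mul (continuousOn_id' _)).add continuousOn_const)
        have ht := spectrum_nonneg_of_nonneg ha ht
        have h : (t + ε)⁻¹ * t * t + ε - t = ε ^ 2 / (t + ε) := by
          field_simp
          ring
        rw [← sub_nonneg, h]
        positivity
    _ = cfc (fun t : ℝ => (t + ε)⁻¹) a * a * a + algebraMap ℝ 𝒜 ε := by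
        rw [cfc_add_const ε (fun t : ℝ => (t + ε)⁻¹ * t * t) a
            ((hcont.mul (continuousOn_id' _)).mul (continuousOn_id' _)),
          cfc_mul (fun t : ℝ => (t + ε)⁻¹ * t) (fun t : ℝ => t) a
            (hcont.mul (continuousOn_id' _)) (continuousOn_id' _),
          cfc_mul _ (fun t : ℝ => t) a hcont (continuousOn_id' _), cfc_id' ℝ a]

end CStarAlgebra

section opAbs

variable {L : Type*} [NormedAddCommGroup L] [InnerProductSpace ℂ L] [CompleteSpace L]

open ContinuousLinearMap

theorem opAbs_eq_cfcAbs (T : L →L[ℂ] L) : opAbs T = CFC.abs T := rfl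

theorem inner_opAbs_apply_opAbs_apply (T : L →L[ℂ] L) (x y : L) :
    ⟪opAbs T x, opAbs T y⟫ = ⟪T x, T y⟫ :=
  calc ⟪opAbs T x, opAbs T y⟫ = ⟪x, (CFC.abs T * CFC.abs T) y⟫ := by
        rw [← adjoint_inner_right, opAbs_eq_cfcAbs, (CFC.abs_nonneg T).isSelfAdjoint.adjoint_eq]
        rfl
    _ = ⟪T x, T y⟫ := by
        rw [CFC.abs_mul_abs, star_eq_adjoint, ← adjoint_inner_right]
        rfl

theorem norm_opAbs_apply (T : L →L[ℂ] L) (x : L) : ‖opAbs T x‖ = ‖T x‖ := by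
  rw [norm_eq_sqrt_re_inner (𝕜 := ℂ), norm_eq_sqrt_re_inner (𝕜 := ℂ),
    inner_opAbs_apply_opAbs_apply]

/-- The witness is `V = T (|T| + ε)⁻¹`, with `V* T = |T|² (|T| + ε)⁻¹ ≥ |T| - ε`. -/
theorem exists_norm_le_one_re_inner_opAbs_le (T : L →L[ℂ] L) {ε : ℝ} (hε : 0 < ε) :
    ∃ V : L →L[ℂ] L, ‖V‖ ≤ 1 ∧
      ∀ ξ : L, (⟪ξ, opAbs T ξ⟫).re ≤ (⟪V ξ, T ξ⟫).re + ε * ‖ξ‖ ^ 2 := by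
  set A := opAbs T
  have hA : 0 ≤ A := CFC.abs_nonneg T
  set B := cfc (fun t : ℝ => (t + ε)⁻¹) A
  refine ⟨T ∘L B, opNorm_le_bound _ zero_le_one fun ξ => ?_, fun ξ => ?_⟩
  · calc ‖T (B ξ)‖ = ‖(A * B) ξ‖ := (norm_opAbs_apply T (B ξ)).symm
      _ ≤ ‖A * B‖ * ‖ξ‖ := le_opNorm _ _
      _ ≤ 1 * ‖ξ‖ := by gcongr; exact norm_mul_cfc_inv_add_le_one hA hε
  · have hinner : ⟪T (B ξ), T ξ⟫ = ⟪ξ, (B * A * A) ξ⟫ :=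
      calc ⟪T (B ξ), T ξ⟫ = ⟪A (B ξ), A ξ⟫ := (inner_opAbs_apply_opAbs_apply T _ _).symm
        _ = ⟪B ξ, A (A ξ)⟫ := hA.isSelfAdjoint.isSymmetric _ _
        _ = ⟪ξ, B (A (A ξ))⟫ := (cfc_predicate _ A : IsSelfAdjoint B).isSymmetric _ _
    have hsmul : (⟪ξ, ε • ξ⟫).re = ε * ‖ξ‖ ^ 2 := by
      rw [RCLike.real_smul_eq_coe_smul (K := ℂ), inner_smul_right, inner_self_eq_norm_sq_to_K]
      norm_cast
    have := ((le_def _ _).mp (le_cfc_inv_add_mul_mul_add hA hε)).re_inner_nonneg_right ξ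
    simp only [sub_apply, add_apply, ContinuousLinearMap.algebraMap_apply, inner_sub_right,
      inner_add_right, map_sub, map_add, RCLike.re_to_complex, hsmul] at this
    rw [comp_apply, hinner]
    linarith

theorem isTraceClassOp_of_sum_re_inner_le {ι : Type} (T : L →L[ℂ] L) (e : HilbertBasis ι ℂ L)
    {C : ℝ} (hC : ∀ V : L →L[ℂ] L, ‖V‖ ≤ 1 → ∀ F : Finset ι, ∑ i ∈ F, (⟪V (e i), T (e i)⟫).re ≤ C) :
    IsTraceClassOp T := by
  have hA : (opAbs T).IsPositive := (nonneg_iff_isPositive _).mp (CFC.abs_nonneg T)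
  refine ⟨ι, e, summable_of_sum_le (c := C) (fun i => hA.re_inner_nonneg_right (e i)) fun F => ?_⟩
  refine le_of_forall_pos_le_add fun δ hδ => ?_
  obtain ⟨V, hV, hVT⟩ :=
    exists_norm_le_one_re_inner_opAbs_le T (ε := δ / (F.card + 1)) (by positivity)
  calc ∑ i ∈ F, (⟪e i, opAbs T (e i)⟫).re
      ≤ ∑ i ∈ F, ((⟪V (e i), T (e i)⟫).re + δ / (F.card + 1)) :=
        Finset.sum_le_sum fun i _ => by simpa [e.orthonormal.1 i] using hVT (e i)
    _ = ∑ i ∈ F, (⟪V (e i), T (e i)⟫).re + F.card * (δ / (F.card + 1)) := by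
        rw [Finset.sum_add_distrib, Finset.sum_const, nsmul_eq_mul]
    _ ≤ C + δ := by
        refine add_le_add (hC V hV F) ?_
        rw [mul_div_left_comm]
        exact mul_le_of_le_one_right hδ.le (div_le_one_of_le₀ (by linarith) (by positivity))

end opAbs

theorem HilbertBasis.hasSum_norm_inner_sq {𝕜 E ι : Type*} [RCLike 𝕜] [NormedAddCommGroup E]
    [InnerProductSpace 𝕜 E] (b : HilbertBasis ι 𝕜 E) (x : E) :
    HasSum (fun i => ‖inner 𝕜 (b i) x‖ ^ 2) (‖x‖ ^ 2) := by
  have h := b.hasSum_inner_mul_inner x x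
  simp_rw [← inner_conj_symm x (b _), RCLike.conj_mul, inner_self_eq_norm_sq_to_K] at h
  exact_mod_cast h

namespace LinearMap

variable {L : Type*} [NormedAddCommGroup L] [InnerProductSpace ℂ L]

def IsAntisymmetric (Λ : L →ₗ[ℝ] L) : Prop :=
  ∀ ξ τ : L, ⟪ξ, Λ τ⟫ = -⟪τ, Λ ξ⟫

namespace IsAntisymmetric

variable {Λ Λ' : L →ₗ[ℝ] L}

theorem map_smul_eq_conj_smul (hΛ : Λ.IsAntisymmetric) (c : ℂ) (ξ : L) :
    Λ (c • ξ) = starRingEnd ℂ c • Λ ξ := by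
  refine ext_inner_left ℂ fun τ => ?_
  rw [hΛ τ (c • ξ), inner_smul_left, hΛ ξ τ, inner_smul_right, hΛ τ ξ]
  ring

theorem inner_map_map_eq (hΛ : Λ.IsAntisymmetric) (hΛ' : Λ'.IsAntisymmetric) (x y : L) :
    ⟪Λ (Λ' x), y⟫ = ⟪x, Λ' (Λ y)⟫ := by
  rw [← inner_conj_symm, hΛ y, map_neg, inner_conj_symm, hΛ' x]

theorem re_inner_map_le (hΛ : Λ.IsAntisymmetric) (y z : L) :
    (⟪y, Λ z⟫).re ≤ (‖z‖ ^ 2 + ‖Λ y‖ ^ 2) / 2 :=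
  calc (⟪y, Λ z⟫).re ≤ ‖⟪z, Λ y⟫‖ := by
        rw [hΛ, ← norm_neg (⟪z, Λ y⟫)]
        exact Complex.re_le_norm _
    _ ≤ ‖z‖ * ‖Λ y‖ := norm_inner_le_norm _ _
    _ ≤ (‖z‖ ^ 2 + ‖Λ y‖ ^ 2) / 2 := by nlinarith [sq_nonneg (‖z‖ - ‖Λ y‖)]

theorem hasSum_norm_inner_map_sq (hΛ : Λ.IsAntisymmetric) {κ : Type*} (f : HilbertBasis κ ℂ L)
    (x : L) : HasSum (fun j => ‖⟪x, Λ (f j)⟫‖ ^ 2) (‖Λ x‖ ^ 2) := by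
  simpa only [hΛ (f _) x, norm_neg] using f.hasSum_norm_inner_sq (Λ x)

variable [CompleteSpace L]

theorem continuous (hΛ : Λ.IsAntisymmetric) : Continuous Λ := by
  apply Λ.continuous_of_isClosed_graph
  have hgraph : (Λ.graph : Set (L × L)) = ⋂ τ : L, {p | ⟪τ, p.2⟫ = -⟪p.1, Λ τ⟫} := by
    ext p
    simp only [Set.mem_iInter, Set.mem_ofPred_eq, SetLike.mem_coe, mem_graph_iff]
    exact ⟨fun h τ => by rw [h, hΛ], fun h => ext_inner_left ℂ fun τ => by rw [h, hΛ, neg_neg]⟩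
  rw [hgraph]
  exact isClosed_iInter fun τ => isClosed_eq (by fun_prop) (by fun_prop)

noncomputable def toCLM (hΛ : Λ.IsAntisymmetric) : L →L⋆[ℂ] L where
  toFun := Λ
  map_add' := Λ.map_add
  map_smul' := hΛ.map_smul_eq_conj_smul
  cont := hΛ.continuous

@[simp]
theorem coe_toCLM (hΛ : Λ.IsAntisymmetric) : ⇑hΛ.toCLM = Λ := rfl

theorem adjoint_comp_toCLM (hΛ : Λ.IsAntisymmetric) (hΛ' : Λ'.IsAntisymmetric) :
    ContinuousLinearMap.adjoint (hΛ'.toCLM.comp hΛ.toCLM) = hΛ.toCLM.comp hΛ'.toCLM :=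
  ((ContinuousLinearMap.eq_adjoint_iff _ _).mpr (hΛ.inner_map_map_eq hΛ')).symm

theorem comp_toCLM_self_nonpos (hΛ : Λ.IsAntisymmetric) : hΛ.toCLM.comp hΛ.toCLM ≤ 0 := by
  rw [← neg_nonneg, ContinuousLinearMap.nonneg_iff_isPositive,
    ContinuousLinearMap.isPositive_iff]
  refine ⟨fun x y => ?_, fun x => ?_⟩
  · simpa [inner_neg_left, inner_neg_right] using hΛ.inner_map_map_eq hΛ x y
  · have h : ⟪(-hΛ.toCLM.comp hΛ.toCLM) x, x⟫ = ⟪Λ x, Λ x⟫ := by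
      simp [hΛ.inner_map_map_eq hΛ, hΛ x, -inner_self_eq_norm_sq_to_K]
    rw [h, inner_self_eq_norm_sq_to_K, ← RCLike.ofReal_pow]
    exact RCLike.ofReal_nonneg.mpr (sq_nonneg _)

theorem re_inner_opAbs_comp_toCLM_self (hΛ : Λ.IsAntisymmetric) (x : L) :
    (⟪x, opAbs (hΛ.toCLM.comp hΛ.toCLM) x⟫).re = ‖Λ x‖ ^ 2 := by
  rw [opAbs_eq_cfcAbs, CFC.abs_of_nonpos _ hΛ.comp_toCLM_self_nonpos]
  simp [hΛ x, inner_self_eq_norm_sq_to_K, ← Complex.ofReal_pow]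

theorem sum_norm_map_sq_le (hΛ : Λ.IsAntisymmetric) {κ ι : Type*} (f : HilbertBasis κ ℂ L)
    (hf : Summable fun j => ‖Λ (f j)‖ ^ 2) {V : L →L[ℂ] L} (hV : ‖V‖ ≤ 1) {e : ι → L}
    (he : Orthonormal ℂ e) (F : Finset ι) :
    ∑ i ∈ F, ‖Λ (V (e i))‖ ^ 2 ≤ ∑' j, ‖Λ (f j)‖ ^ 2 := by
  have hbessel (j : κ) : ∑ i ∈ F, ‖⟪V (e i), Λ (f j)⟫‖ ^ 2 ≤ ‖Λ (f j)‖ ^ 2 :=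
    calc ∑ i ∈ F, ‖⟪V (e i), Λ (f j)⟫‖ ^ 2
        = ∑ i ∈ F, ‖⟪e i, ContinuousLinearMap.adjoint V (Λ (f j))⟫‖ ^ 2 := by
          simp only [ContinuousLinearMap.adjoint_inner_right]
      _ ≤ ‖ContinuousLinearMap.adjoint V (Λ (f j))‖ ^ 2 := he.sum_inner_products_le _
      _ ≤ ‖Λ (f j)‖ ^ 2 := by
          gcongr
          refine (ContinuousLinearMap.le_opNorm _ _).trans
            (mul_le_of_le_one_left (norm_nonneg _) ?_)
          rwa [← ContinuousLinearMap.star_eq_adjoint, norm_star]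
  calc ∑ i ∈ F, ‖Λ (V (e i))‖ ^ 2
      = ∑ i ∈ F, ∑' j, ‖⟪V (e i), Λ (f j)⟫‖ ^ 2 :=
        Finset.sum_congr rfl fun i _ => (hΛ.hasSum_norm_inner_map_sq f _).tsum_eq.symm
    _ = ∑' j, ∑ i ∈ F, ‖⟪V (e i), Λ (f j)⟫‖ ^ 2 :=
        (Summable.tsum_finsetSum fun i _ => (hΛ.hasSum_norm_inner_map_sq f _).summable).symm
    _ ≤ ∑' j, ‖Λ (f j)‖ ^ 2 :=
        (hf.of_nonneg_of_le (fun j => by positivity) hbessel).tsum_le_tsum hbessel hf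

theorem exists_hilbertBasis_summable_norm_map_sq (hΛ : Λ.IsAntisymmetric)
    (h : IsTraceClassFun fun η => Λ (Λ η)) :
    ∃ (ι : Type) (e : HilbertBasis ι ℂ L), Summable fun i => ‖Λ (e i)‖ ^ 2 := by
  obtain ⟨S, hS, ι, e, he⟩ := h
  obtain rfl : S = hΛ.toCLM.comp hΛ.toCLM := DFunLike.coe_injective hS
  exact ⟨ι, e, he.congr fun i => hΛ.re_inner_opAbs_comp_toCLM_self (e i)⟩

theorem isTraceClassOp_comp_toCLM (hΛ : Λ.IsAntisymmetric) (hΛ' : Λ'.IsAntisymmetric)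
    {ι κ : Type} (e : HilbertBasis ι ℂ L) (he : Summable fun i => ‖Λ (e i)‖ ^ 2)
    (f : HilbertBasis κ ℂ L) (hf : Summable fun j => ‖Λ' (f j)‖ ^ 2) :
    IsTraceClassOp (hΛ'.toCLM.comp hΛ.toCLM) := by
  refine isTraceClassOp_of_sum_re_inner_le _ e
    (C := (∑' i, ‖Λ (e i)‖ ^ 2 + ∑' j, ‖Λ' (f j)‖ ^ 2) / 2) fun V hV F => ?_
  calc ∑ i ∈ F, (⟪V (e i), Λ' (Λ (e i))⟫).re
      ≤ ∑ i ∈ F, (‖Λ (e i)‖ ^ 2 + ‖Λ' (V (e i))‖ ^ 2) / 2 :=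
        Finset.sum_le_sum fun i _ => hΛ'.re_inner_map_le _ _
    _ = (∑ i ∈ F, ‖Λ (e i)‖ ^ 2 + ∑ i ∈ F, ‖Λ' (V (e i))‖ ^ 2) / 2 := by
        rw [← Finset.sum_div, Finset.sum_add_distrib]
    _ ≤ _ := by
        gcongr
        · exact he.sum_le_tsum F fun i _ => by positivity
        · exact hΛ'.sum_norm_map_sq_le f hf hV e.orthonormal F

end IsAntisymmetric

end LinearMap

/-- If `Λ, Λ'` are anti-symmetric with `Λ², Λ'²` trace class, then `Λ'∘Λ`
is a bounded complex-linear operator which is trace class, and `(Λ'∘Λ)* = Λ∘Λ'`. -/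
theorem antisymmetric_comp_traceClass_adjoint
    {L : Type*} [NormedAddCommGroup L] [InnerProductSpace ℂ L] [CompleteSpace L]
    (Λ Λ' : L →ₗ[ℝ] L)
    (hΛ : ∀ ξ τ : L, ⟪ξ, Λ τ⟫ = -⟪τ, Λ ξ⟫)
    (hΛ' : ∀ ξ τ : L, ⟪ξ, Λ' τ⟫ = -⟪τ, Λ' ξ⟫)
    (h2 : IsTraceClassFun (fun η => Λ (Λ η)))
    (h2' : IsTraceClassFun (fun η => Λ' (Λ' η))) :
    ∃ T : L →L[ℂ] L, ⇑T = (fun η => Λ' (Λ η)) ∧ IsTraceClassOp T ∧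
      ⇑(ContinuousLinearMap.adjoint T) = (fun η => Λ (Λ' η)) := by
  have hΛ : Λ.IsAntisymmetric := hΛ
  have hΛ' : Λ'.IsAntisymmetric := hΛ'
  obtain ⟨ι, e, he⟩ := hΛ.exists_hilbertBasis_summable_norm_map_sq h2
  obtain ⟨κ, f, hf⟩ := hΛ'.exists_hilbertBasis_summable_norm_map_sq h2'
  exact ⟨hΛ'.toCLM.comp hΛ.toCLM, rfl, hΛ.isTraceClassOp_comp_toCLM hΛ' e he f hf,
    congrArg DFunLike.coe (hΛ.adjoint_comp_toCLM hΛ')⟩
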